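/- The Hilbert system bMDL (S4 plus axiom schemata (1)–(3) for O) is consistent: ⊥ is not derivable in bMDL. -/

import Mathlib

/-- Formulas of bMDL: atoms, ⊥, →, □, and dyadic O(·/·). -/
inductive Fm (V : Type) : Type
  | var : V → Fm V
  | bot : Fm V
  | imp : Fm V → Fm V → Fm V
  | box : Fm V → Fm V
  | ob  : Fm V → Fm V → Fm V

namespace Fm
variable {V : Type}
def neg (φ : Fm V) : Fm V := φ.imp .bot
def top : Fm V := (Fm.bot (V := V)).neg
def and (φ ψ : Fm V) : Fm V := (φ.imp ψ.neg).neg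
def or  (φ ψ : Fm V) : Fm V := φ.neg.imp ψ
def iff (φ ψ : Fm V) : Fm V := (φ.imp ψ).and (ψ.imp φ)
end Fm

/-- A Mīmāṃsā model: an m-frame (nonempty W, reflexive transitive R,
neighbourhood map η satisfying conditions (ii)–(v)) with a valuation. -/
structure MModel (V W : Type) where
  ne : Nonempty W
  R : W → W → Prop
  refl : ∀ w, R w w
  trans : ∀ {a b c}, R a b → R b c → R a c
  η : W → Set (Set W × Set W)
  η_sub : ∀ w X Y, (X, Y) ∈ η w → X ⊆ {v | R w v} ∧ Y ⊆ {v | R w v}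
  η_mono : ∀ w X Y Z, (X, Z) ∈ η w → X ⊆ Y → Y ⊆ {v | R w v} → (Y, Z) ∈ η w
  η_nonempty : ∀ w X, ((∅ : Set W), X) ∉ η w
  η_noconflict : ∀ w X Y, (X, Y) ∈ η w → (Xᶜ ∩ {v | R w v}, Y) ∉ η w
  σ : W → Set V

/-- Truth of a formula at a world. -/
def MModel.sat {V W : Type} (M : MModel V W) : W → Fm V → Prop
  | w, .var p => p ∈ M.σ w
  | _, .bot => False
  | w, .imp φ ψ => M.sat w φ → M.sat w ψ
  | w, .box φ => ∀ v, M.R w v → M.sat v φ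
  | w, .ob φ ψ =>
      ({v | M.sat v φ} ∩ {v | M.R w v}, {v | M.sat v ψ} ∩ {v | M.R w v}) ∈ M.η w

/-- Validity in a model: truth at every world. -/
def MModel.valid {V W : Type} (M : MModel V W) (φ : Fm V) : Prop :=
  ∀ w, M.sat w φ

/-- The Hilbert system bMDL: classical propositional logic (over →,⊥),
S4 axioms K, T, 4 for □, deontic axioms (1)–(3), with modus ponens and
necessitation. -/
inductive Prov {V : Type} : Fm V → Prop
  | pl1 (φ ψ : Fm V) : Prov (φ.imp (ψ.imp φ))
  | pl2 (φ ψ χ : Fm V) :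
      Prov ((φ.imp (ψ.imp χ)).imp ((φ.imp ψ).imp (φ.imp χ)))
  | dne (φ : Fm V) : Prov (φ.neg.neg.imp φ)
  | axK (φ ψ : Fm V) :
      Prov ((Fm.box (φ.imp ψ)).imp ((Fm.box φ).imp (Fm.box ψ)))
  | axT (φ : Fm V) : Prov ((Fm.box φ).imp φ)
  | ax4 (φ : Fm V) : Prov ((Fm.box φ).imp (Fm.box (Fm.box φ)))
  | d1 (φ ψ θ : Fm V) :
      Prov (((Fm.box (φ.imp ψ)).and (Fm.ob φ θ)).imp (Fm.ob ψ θ))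
  | d2 (φ ψ θ : Fm V) :
      Prov ((Fm.box (ψ.imp φ.neg)).imp ((Fm.ob φ θ).and (Fm.ob ψ θ)).neg)
  | d3 (φ ψ θ : Fm V) :
      Prov (((Fm.box ((ψ.imp θ).and (θ.imp ψ))).and (Fm.ob φ ψ)).imp (Fm.ob φ θ))
  | mp {φ ψ : Fm V} : Prov (φ.imp ψ) → Prov φ → Prov ψ
  | nec {φ : Fm V} : Prov φ → Prov (Fm.box φ)

/-!
bMDL is sound for Mīmāṃsā models: reflexivity and transitivity of `R` validate T and 4,
monotonicity of `η` validates (1), monotonicity together with the no-conflict condition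
validates (2), and (3) holds because `O(φ/ψ)` only sees the truth set of `ψ` restricted to the
accessible worlds. Since `⊥` is false at every world and the one-world model with empty `η`
is a Mīmāṃsā model, `⊥` is not derivable.
-/

namespace MModel

variable {V W : Type} (M : MModel V W)

@[simp]
theorem sat_neg (w : W) (φ : Fm V) : M.sat w φ.neg ↔ ¬ M.sat w φ := Iff.rfl

@[simp]
theorem sat_and (w : W) (φ ψ : Fm V) : M.sat w (φ.and ψ) ↔ M.sat w φ ∧ M.sat w ψ := by
  simp only [Fm.and, sat_neg]
  exact Classical.not_imp.trans (and_congr_right fun _ => not_not)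

theorem sat_ob_mono {w : W} {φ ψ θ : Fm V} (hφψ : M.sat w (Fm.box (φ.imp ψ)))
    (hφ : M.sat w (Fm.ob φ θ)) : M.sat w (Fm.ob ψ θ) :=
  M.η_mono w _ _ _ hφ (fun v ⟨hv, hwv⟩ => ⟨hφψ v hwv hv, hwv⟩) Set.inter_subset_right

theorem sat_ob_not_incompatible {w : W} {φ ψ θ : Fm V} (hψφ : M.sat w (Fm.box (ψ.imp φ.neg)))
    (hφ : M.sat w (Fm.ob φ θ)) (hψ : M.sat w (Fm.ob ψ θ)) : False :=
  M.η_noconflict w _ _ hφ <|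
    M.η_mono w _ _ _ hψ (fun v ⟨hv, hwv⟩ => ⟨fun h => hψφ v hwv hv h.1, hwv⟩)
      Set.inter_subset_right

theorem sat_ob_congr_right {w : W} {φ ψ θ : Fm V}
    (hψθ : M.sat w (Fm.box ((ψ.imp θ).and (θ.imp ψ)))) (hψ : M.sat w (Fm.ob φ ψ)) :
    M.sat w (Fm.ob φ θ) := by
  have hcond : {v | M.sat v ψ} ∩ {v | M.R w v} = {v | M.sat v θ} ∩ {v | M.R w v} := by
    ext v
    simp only [Set.mem_inter_iff, Set.mem_ofPred_eq]
    exact and_congr_left fun hwv =>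
      let ⟨hψθ', hθψ'⟩ := (M.sat_and v _ _).1 (hψθ v hwv)
      ⟨hψθ', hθψ'⟩
  simpa only [sat, hcond] using hψ

theorem valid_of_prov {φ : Fm V} (h : Prov φ) : M.valid φ := by
  induction h with
  | pl1 => exact fun _ hφ _ => hφ
  | pl2 => exact fun _ hφψχ hφψ hφ => hφψχ hφ (hφψ hφ)
  | dne => exact fun _ hnn => by_contra hnn
  | axK => exact fun _ hφψ hφ v hwv => hφψ v hwv (hφ v hwv)
  | axT => exact fun w hφ => hφ w (M.refl w)
  | ax4 => exact fun _ hφ v hwv u hvu => hφ u (M.trans hwv hvu)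
  | d1 => exact fun w h => let ⟨h₁, h₂⟩ := (M.sat_and w _ _).1 h; M.sat_ob_mono h₁ h₂
  | d2 => exact fun w hψφ h =>
      let ⟨h₁, h₂⟩ := (M.sat_and w _ _).1 h; M.sat_ob_not_incompatible hψφ h₁ h₂
  | d3 => exact fun w h => let ⟨h₁, h₂⟩ := (M.sat_and w _ _).1 h; M.sat_ob_congr_right h₁ h₂
  | mp _ _ ihφψ ihφ => exact fun w => ihφψ w (ihφ w)
  | nec _ ihφ => exact fun _ v _ => ihφ v

theorem not_valid_bot : ¬ M.valid Fm.bot := fun h => h M.ne.some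

def unit (V : Type) : MModel V Unit where
  ne := ⟨()⟩
  R _ _ := True
  refl _ := trivial
  trans _ _ := trivial
  η _ := ∅
  η_sub _ _ _ h := h.elim
  η_mono _ _ _ _ h := h.elim
  η_nonempty _ _ h := h.elim
  η_noconflict _ _ _ h := h.elim
  σ _ := ∅

end MModel

/-- The Hilbert system bMDL is consistent: ⊥ is not derivable. -/
theorem stmt11 : ¬ Prov (Fm.bot (V := ℕ)) := fun h =>
  (MModel.unit ℕ).not_valid_bot ((MModel.unit ℕ).valid_of_prov h)
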